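/- arXiv:2412.17082 — 5 statements merged into one kernel-verified Lean document; each statement's English description precedes it below -/
import Mathlib

section
/- For any α ∈ (0,1], setting θ = 1 - √(1-α) and β = (1-α)/(1 - √(1-α)), the value s* = 1/√(1-α) - 1 minimizes the function s ↦ (1-α)(1+1/s)/(1 - (1-α)(1+s)) over s ∈ (0, α/(1-α)), and β/θ = (√(1-α)/(1-√(1-α)))². -/
theorem stmt_2 (α : ℝ) (hα0 : 0 < α) (hα1 : α < 1)
    (θ β sstar : ℝ)
    (hθ : θ = 1 - Real.sqrt (1 - α))
    (hβ : β = (1 - α) / (1 - Real.sqrt (1 - α)))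
    (hs : sstar = 1 / Real.sqrt (1 - α) - 1) :
    (0 < sstar ∧ sstar < α / (1 - α)) ∧
    (∀ s : ℝ, 0 < s → s < α / (1 - α) →
      (1 - α) * (1 + 1 / sstar) / (1 - (1 - α) * (1 + sstar)) ≤
      (1 - α) * (1 + 1 / s) / (1 - (1 - α) * (1 + s))) ∧
    β / θ = (Real.sqrt (1 - α) / (1 - Real.sqrt (1 - α)))^2 := by
  set r := Real.sqrt (1 - α) with hrdef
  have h1α : (0:ℝ) < 1 - α := by linarith
  have hr0 : 0 < r := Real.sqrt_pos.mpr h1α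
  have hr2 : r * r = 1 - α := Real.mul_self_sqrt h1α.le
  have hr1 : r < 1 := by nlinarith
  have h1r : 0 < 1 - r := by linarith
  have hsstar0 : 0 < sstar := by
    rw [hs]
    have : 1 < 1 / r := one_lt_one_div hr0 hr1
    linarith
  have hαdiv : α / (1 - α) = (1 - r * r) / (r * r) := by rw [hr2]; ring_nf
  have hsstarlt : sstar < α / (1 - α) := by
    rw [hs, hαdiv]
    have h' : 1 / r - 1 = (1 - r) / r := by field_simp
    rw [h', div_lt_div_iff₀ hr0 (by positivity)]
    nlinarith
  refine ⟨⟨hsstar0, hsstarlt⟩, ?_, ?_⟩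
  · intro s hs0 hsα
    have hden : 0 < 1 - (1 - α) * (1 + s) := by
      rw [hαdiv, lt_div_iff₀ (by positivity)] at hsα
      nlinarith
    have hLHS : (1 - α) * (1 + 1 / sstar) / (1 - (1 - α) * (1 + sstar))
        = (r * r) / ((1 - r) * (1 - r)) := by
      rw [hs, ← hr2]
      have h1s : 1 + (1 / r - 1) = 1 / r := by ring
      have hinv : 1 / (1 / r - 1) = r / (1 - r) := by
        rw [one_div, one_div]
        rw [eq_div_iff h1r.ne']
        field_simp
      rw [h1s, hinv]
      rw [div_eq_div_iff]
      · field_simp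
        ring
      · have : r * r * (1 / r) = r := by field_simp
        rw [this]; linarith
      · positivity
    rw [hLHS]
    rw [div_le_div_iff₀ (by positivity) hden]
    have hkey : 0 ≤ ((1 - r) - r * s)^2 := sq_nonneg _
    have h1div : 1 + 1 / s = (s + 1) / s := by field_simp
    rw [h1div, ← hr2]
    have h2 : r * r * ((s + 1) / s) * ((1 - r) * (1 - r))
        = r * r * (s + 1) * ((1 - r) * (1 - r)) / s := by
      field_simp
    rw [h2, le_div_iff₀ hs0]
    nlinarith [sq_nonneg ((1 - r) - r * s), mul_pos hr0 hr0]
  · rw [hβ, hθ, ← hr2]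
    ring
end

section
/- Let f: ℝ^d → ℝ be convex with minimizer x*, and let g be a subgradient of f at w. Then for any x, x* ∈ ℝ^d, any stepsize γ > 0 and any λ > 0, the point x⁺ := x - γ·g satisfies ‖x⁺ - x*‖² ≤ ‖x - x*‖² - 2γ(f(w) - f(x*)) + (1/λ)‖w - x‖² + (1+λ)γ²‖g‖². -/
open scoped RealInnerProductSpace

theorem stmt_4 {d : ℕ} (f : EuclideanSpace ℝ (Fin d) → ℝ)
    (hconv : ConvexOn ℝ Set.univ f)
    (xstar : EuclideanSpace ℝ (Fin d)) (hmin : ∀ y, f xstar ≤ f y)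
    (w x g : EuclideanSpace ℝ (Fin d))
    (hsub : ∀ y, f w + ⟪g, y - w⟫ ≤ f y)
    (γ lam : ℝ) (hγ : 0 < γ) (hlam : 0 < lam) :
    ‖(x - γ • g) - xstar‖^2 ≤
      ‖x - xstar‖^2 - 2 * γ * (f w - f xstar)
      + (1 / lam) * ‖w - x‖^2 + (1 + lam) * γ^2 * ‖g‖^2 := by
  have h1 : ‖(x - γ • g) - xstar‖^2
      = ‖x - xstar‖^2 - 2*γ*⟪g, x - xstar⟫ + γ^2*‖g‖^2 := by
    have : (x - γ • g) - xstar = (x - xstar) - γ • g := by abel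
    rw [this, norm_sub_sq_real, real_inner_smul_right, norm_smul,
      real_inner_comm]
    simp [abs_of_pos hγ]
    ring
  have h2 : f w - f xstar ≤ ⟪g, w - xstar⟫ := by
    have := hsub xstar
    have hinner : ⟪g, xstar - w⟫ = -⟪g, w - xstar⟫ := by
      rw [← inner_neg_right]; congr 1; abel
    linarith [hinner ▸ this]
  have hsplit : ⟪g, x - xstar⟫ = ⟪g, w - xstar⟫ + ⟪g, x - w⟫ := by
    rw [← inner_add_right]; congr 1; abel
  have h3 : -(2*γ*⟪g, x - w⟫) ≤ (1/lam)*‖w - x‖^2 + lam*γ^2*‖g‖^2 := by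
    have hle : ⟪g, w - x⟫ ≤ ‖g‖ * ‖w - x‖ := real_inner_le_norm g (w - x)
    have hinner : ⟪g, x - w⟫ = -⟪g, w - x⟫ := by
      rw [← inner_neg_right]; congr 1; abel
    have hsq := sq_nonneg (‖w - x‖ - lam*γ*‖g‖)
    have hn : (0:ℝ) ≤ ‖g‖ := norm_nonneg _
    have hn2 : (0:ℝ) ≤ ‖w - x‖ := norm_nonneg _
    rw [hinner]
    have hinv : (1/lam)*lam = 1 := by field_simp
    nlinarith [hsq, hle, hγ.le, hn, hn2, hinv, hlam, mul_pos hlam hγ,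
      sq_nonneg ((1/lam)*‖w - x‖ - γ*‖g‖)]
  nlinarith [h1, h2, hsplit, h3]
end

section
/- Let C: ℝ^d → ℝ^d be a random map satisfying E[‖C(v) - v‖²] ≤ (1-α)‖v‖² for all v and some α ∈ (0,1]. Let w, x ∈ ℝ^d, γ > 0, g ∈ ℝ^d, and set x⁺ = x - γg and w⁺ = w + C(x⁺ - w). Then with θ = 1 - √(1-α) and β = (1-α)/(1-√(1-α)), we have E[‖w⁺ - x⁺‖²] ≤ (1-θ)‖w - x‖² + γ²β‖g‖². -/
/-!
Write `v = x⁺ - w`, so that `w⁺ - x⁺ = C(v) - v` and the contraction property bounds the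
expectation by `(1 - α)‖v‖² = r²‖v‖²` with `r = √(1 - α)`. Splitting `v = (x - w) - γg` by
Young's inequality with weights `r` and `1 - r` gives
`r²‖v‖² ≤ r‖w - x‖² + r²/(1 - r) γ²‖g‖²`, which is the claim since `1 - θ = r` and `β = r²/(1 - r)`.
-/

open MeasureTheory

section Young

variable {E : Type*} [SeminormedAddCommGroup E]

/-- Young's inequality `‖a + b‖² ≤ ‖a‖²/(1 - t) + ‖b‖²/t`, with the denominators cleared. -/
theorem mul_one_sub_mul_norm_add_sq_le {t : ℝ} (ht0 : 0 ≤ t) (ht1 : t ≤ 1) (a b : E) :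
    t * (1 - t) * ‖a + b‖ ^ 2 ≤ (1 - t) * ‖a‖ ^ 2 + t * ‖b‖ ^ 2 := by
  calc t * (1 - t) * ‖a + b‖ ^ 2 ≤ t * (1 - t) * (‖a‖ + ‖b‖) ^ 2 := by
        gcongr
        exact norm_add_le a b
    _ ≤ (1 - t) * ‖a‖ ^ 2 + t * ‖b‖ ^ 2 := by
        nlinarith [sq_nonneg ((1 - t) * ‖a‖ - t * ‖b‖)]

theorem sq_mul_norm_add_sq_le {r : ℝ} (hr0 : 0 ≤ r) (hr1 : r < 1) (a b : E) :
    r ^ 2 * ‖a + b‖ ^ 2 ≤ r * ‖a‖ ^ 2 + r ^ 2 / (1 - r) * ‖b‖ ^ 2 := by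
  have h1r : 0 < 1 - r := sub_pos.2 hr1
  calc r ^ 2 * ‖a + b‖ ^ 2 = r / (1 - r) * (r * (1 - r) * ‖a + b‖ ^ 2) := by
        field_simp
    _ ≤ r / (1 - r) * ((1 - r) * ‖a‖ ^ 2 + r * ‖b‖ ^ 2) := by
        gcongr
        exact mul_one_sub_mul_norm_add_sq_le hr0 hr1.le a b
    _ = r * ‖a‖ ^ 2 + r ^ 2 / (1 - r) * ‖b‖ ^ 2 := by
        field_simp

end Young

theorem stmt_6_general {d : ℕ} {Ω : Type*} [MeasurableSpace Ω]
    (μ : Measure Ω)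
    (C : Ω → EuclideanSpace ℝ (Fin d) → EuclideanSpace ℝ (Fin d))
    (α : ℝ) (hα0 : 0 < α) (hα1 : α < 1)
    (hC : ∀ v : EuclideanSpace ℝ (Fin d),
      ∫ ξ, ‖C ξ v - v‖^2 ∂μ ≤ (1 - α) * ‖v‖^2)
    (w x g : EuclideanSpace ℝ (Fin d)) (γ : ℝ)
    (θ β : ℝ)
    (hθ : θ = 1 - Real.sqrt (1 - α))
    (hβ : β = (1 - α) / (1 - Real.sqrt (1 - α))) :
    ∫ ξ, ‖(w + C ξ ((x - γ • g) - w)) - (x - γ • g)‖^2 ∂μ ≤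
      (1 - θ) * ‖w - x‖^2 + γ^2 * β * ‖g‖^2 := by
  set r := Real.sqrt (1 - α)
  set v := (x - γ • g) - w
  have hr1 : r < 1 := (Real.sqrt_lt' one_pos).2 (by linarith)
  have hsub : ∀ ξ, (w + C ξ v) - (x - γ • g) = C ξ v - v := fun ξ => by
    simp only [v]; abel
  have hsplit : v = (x - w) + -(γ • g) := by simp only [v]; abel
  have hr2 : r ^ 2 = 1 - α := Real.sq_sqrt (by linarith)
  calc ∫ ξ, ‖(w + C ξ v) - (x - γ • g)‖ ^ 2 ∂μ = ∫ ξ, ‖C ξ v - v‖ ^ 2 ∂μ := by simp only [hsub]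
    _ ≤ r ^ 2 * ‖v‖ ^ 2 := hr2 ▸ hC v
    _ ≤ r * ‖x - w‖ ^ 2 + r ^ 2 / (1 - r) * ‖-(γ • g)‖ ^ 2 :=
        hsplit ▸ sq_mul_norm_add_sq_le (Real.sqrt_nonneg _) hr1 _ _
    _ = (1 - θ) * ‖w - x‖ ^ 2 + γ ^ 2 * β * ‖g‖ ^ 2 := by
        rw [norm_neg, norm_smul, mul_pow, Real.norm_eq_abs, sq_abs, norm_sub_rev, hθ, hβ, ← hr2]
        ring

theorem stmt_6 {d : ℕ} {Ω : Type*} [MeasurableSpace Ω]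
    (μ : Measure Ω) [IsProbabilityMeasure μ]
    (C : Ω → EuclideanSpace ℝ (Fin d) → EuclideanSpace ℝ (Fin d))
    (α : ℝ) (hα0 : 0 < α) (hα1 : α < 1)
    (hC : ∀ v : EuclideanSpace ℝ (Fin d),
      ∫ ξ, ‖C ξ v - v‖^2 ∂μ ≤ (1 - α) * ‖v‖^2)
    (w x g : EuclideanSpace ℝ (Fin d)) (γ : ℝ) (hγ : 0 < γ)
    (θ β : ℝ)
    (hθ : θ = 1 - Real.sqrt (1 - α))
    (hβ : β = (1 - α) / (1 - Real.sqrt (1 - α))) :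
    ∫ ξ, ‖(w + C ξ ((x - γ • g) - w)) - (x - γ • g)‖^2 ∂μ ≤
      (1 - θ) * ‖w - x‖^2 + γ^2 * β * ‖g‖^2 :=
  stmt_6_general μ C α hα0 hα1 hC w x g γ θ β hθ hβ
end

section
/- Let f₁,...,f_n: ℝ^d → ℝ be convex functions with f = (1/n)∑ᵢ fᵢ having minimizer x*. Let w₁,...,w_n, x ∈ ℝ^d, let gᵢ be a subgradient of fᵢ at wᵢ, and set x⁺ = x - γ·(1/n)∑ᵢ gᵢ for γ > 0. Then for any λ > 0: ‖x⁺ - x*‖² ≤ ‖x - x*‖² - 2γ((1/n)∑ᵢ fᵢ(wᵢ) - f(x*)) + λγ²·(1/n)∑ᵢ‖gᵢ‖² + (1/λ)·(1/n)∑ᵢ‖wᵢ - x‖² + γ²‖(1/n)∑ᵢ gᵢ‖². -/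
open scoped RealInnerProductSpace

theorem stmt_11 {d n : ℕ} (hn : 1 ≤ n)
    (f : Fin n → EuclideanSpace ℝ (Fin d) → ℝ)
    (hconv : ∀ i, ConvexOn ℝ Set.univ (f i))
    (F : EuclideanSpace ℝ (Fin d) → ℝ)
    (hF : ∀ y, F y = (n : ℝ)⁻¹ * ∑ i, f i y)
    (xstar : EuclideanSpace ℝ (Fin d)) (hmin : ∀ y, F xstar ≤ F y)
    (w : Fin n → EuclideanSpace ℝ (Fin d)) (x : EuclideanSpace ℝ (Fin d))
    (g : Fin n → EuclideanSpace ℝ (Fin d))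
    (hsub : ∀ i, ∀ y, f i (w i) + ⟪g i, y - w i⟫ ≤ f i y)
    (γ lam : ℝ) (hγ : 0 < γ) (hlam : 0 < lam) :
    ‖(x - γ • ((n : ℝ)⁻¹ • ∑ i, g i)) - xstar‖^2 ≤
      ‖x - xstar‖^2 - 2 * γ * ((n : ℝ)⁻¹ * ∑ i, f i (w i) - F xstar)
      + lam * γ^2 * ((n : ℝ)⁻¹ * ∑ i, ‖g i‖^2)
      + (1 / lam) * ((n : ℝ)⁻¹ * ∑ i, ‖w i - x‖^2)
      + γ^2 * ‖(n : ℝ)⁻¹ • ∑ i, g i‖^2 := by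
  set v := x - xstar with hv
  set G := ((n : ℝ)⁻¹ • ∑ i, g i) with hG
  have hexp : ‖(x - γ • G) - xstar‖^2 = ‖v‖^2 - 2*γ*⟪G, v⟫ + γ^2 * ‖G‖^2 := by
    have h1 : (x - γ • G) - xstar = v - γ • G := by
      rw [hv]; abel
    rw [h1, norm_sub_sq_real, real_inner_smul_right, real_inner_comm, norm_smul]
    simp [abs_of_pos hγ]
    ring
  have hGs : ⟪G, v⟫ = (n:ℝ)⁻¹ * ∑ i, ⟪g i, v⟫ := by
    rw [hG, real_inner_smul_left, sum_inner]
  have key : ∀ i, f i (w i) - f i xstar - (lam*γ/2)*‖g i‖^2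
      - (1/(2*lam*γ))*‖w i - x‖^2 ≤ ⟪g i, v⟫ := by
    intro i
    have h1 := hsub i xstar
    have hc : 0 < lam*γ := mul_pos hlam hγ
    have h2 : ⟪g i, w i - x⟫ ≤ (lam*γ/2)*‖g i‖^2 + (1/(2*lam*γ))*‖w i - x‖^2 := by
      have hcs := real_inner_le_norm (g i) (w i - x)
      have hid : (lam*γ/2)*‖g i‖^2 + (1/(2*lam*γ))*‖w i - x‖^2 - ‖g i‖*‖w i - x‖
          = (lam*γ*‖g i‖ - ‖w i - x‖)^2 / (2*lam*γ) := by
        field_simp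
        ring
      have hpos : (0:ℝ) ≤ (lam*γ*‖g i‖ - ‖w i - x‖)^2 / (2*lam*γ) := by positivity
      linarith
    have h3 : ⟪g i, v⟫ = -⟪g i, xstar - w i⟫ - ⟪g i, w i - x⟫ := by
      simp only [hv, inner_sub_right]; ring
    linarith
  have hsum : ∑ i, (f i (w i) - f i xstar - (lam*γ/2)*‖g i‖^2
      - (1/(2*lam*γ))*‖w i - x‖^2) ≤ ∑ i, ⟪g i, v⟫ :=
    Finset.sum_le_sum (fun i _ => key i)
  rw [Finset.sum_sub_distrib, Finset.sum_sub_distrib, Finset.sum_sub_distrib,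
    ← Finset.mul_sum, ← Finset.mul_sum] at hsum
  have hmul := mul_le_mul_of_nonneg_left hsum (by positivity : (0:ℝ) ≤ 2*γ*(n:ℝ)⁻¹)
  have expand : 2*γ*(n:ℝ)⁻¹ * ((∑ i, f i (w i)) - (∑ i, f i xstar)
        - (lam*γ/2) * (∑ i, ‖g i‖^2) - (1/(2*lam*γ)) * (∑ i, ‖w i - x‖^2))
      = 2*γ*((n:ℝ)⁻¹ * (∑ i, f i (w i)) - (n:ℝ)⁻¹ * (∑ i, f i xstar))
        - lam*γ^2*((n:ℝ)⁻¹ * ∑ i, ‖g i‖^2)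
        - (1/lam)*((n:ℝ)⁻¹ * ∑ i, ‖w i - x‖^2) := by
    field_simp
  rw [expand] at hmul
  rw [hexp, hGs, hF]
  nlinarith [hmul]
end

section
/- Let Q₁,...,Q_n: ℝ^d → ℝ^d be (possibly correlated) unbiased compressors each satisfying E[Qᵢ(v)] = v and E[‖Qᵢ(v)-v‖²] ≤ ω‖v‖². Let x, x⁺, w₁,...,w_n ∈ ℝ^d, let c be a Bernoulli(p) variable independent of the compressors, and define wᵢ⁺ = x⁺ if c = 1, and wᵢ⁺ = wᵢ + Qᵢ(x⁺ - x) if c = 0. Then (1/n)∑ᵢ E[‖wᵢ⁺ - x⁺‖²] ≤ (1-p)·(1/n)∑ᵢ‖wᵢ - x‖² + (1-p)ω‖x⁺ - x‖². -/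
/-!
On `{c = 1}` every error `wᵢ⁺ - x⁺` vanishes. On `{c = 0}`, which is independent of the
compressors, `wᵢ⁺ - x⁺ = (wᵢ - x) + (Qᵢ(v) - v)` with `v = x⁺ - x`, and the second summand has
mean zero, so the expected squared norm splits as `‖wᵢ - x‖² + E‖Qᵢ(v) - v‖²`, which is at most
`‖wᵢ - x‖² + ω‖v‖²`. Averaging over `i` gives the bound.
-/

open MeasureTheory

section

variable {Ω E : Type*} [MeasurableSpace Ω] {μ : Measure Ω} [IsProbabilityMeasure μ]
  [NormedAddCommGroup E] [InnerProductSpace ℝ E] [CompleteSpace E]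

theorem integral_norm_add_sq_of_integral_eq_zero (a : E) {Y : Ω → E} (hY : Integrable Y μ)
    (hY_sq : Integrable (fun ξ => ‖Y ξ‖ ^ 2) μ) (hY_mean : ∫ ξ, Y ξ ∂μ = 0) :
    ∫ ξ, ‖a + Y ξ‖ ^ 2 ∂μ = ‖a‖ ^ 2 + ∫ ξ, ‖Y ξ‖ ^ 2 ∂μ := by
  have h_cross : Integrable (fun ξ => 2 * inner ℝ a (Y ξ)) μ := (hY.const_inner a).const_mul 2
  have h_affine : Integrable (fun ξ => ‖a‖ ^ 2 + 2 * inner ℝ a (Y ξ)) μ :=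
    (integrable_const _).add h_cross
  simp_rw [norm_add_sq_real]
  rw [integral_add h_affine hY_sq,
    integral_add (integrable_const _) h_cross, integral_const_mul, integral_inner hY, hY_mean]
  simp

end

theorem integral_prod_ite_bool {Ω₁ Ω₂ : Type*} [MeasurableSpace Ω₁] [MeasurableSpace Ω₂]
    {μ₁ : Measure Ω₁} {μ₂ : Measure Ω₂} [SFinite μ₁] [SFinite μ₂] {c : Ω₁ → Bool}
    (hc : Measurable c) (g : Ω₂ → ℝ) :
    ∫ ξ, (if c ξ.1 then 0 else g ξ.2) ∂(μ₁.prod μ₂) =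
      μ₁.real {ξ | c ξ = false} * ∫ ξ, g ξ ∂μ₂ := by
  have h_meas : MeasurableSet {ξ | c ξ = false} := hc (measurableSet_singleton false)
  rw [← integral_indicator_one h_meas, ← integral_prod_mul]
  congr with ξ
  rcases h : c ξ.1 <;> simp [Set.indicator, h]

theorem probReal_eq_false {Ω : Type*} [MeasurableSpace Ω] {μ : Measure Ω}
    [IsProbabilityMeasure μ] {c : Ω → Bool} (hc : Measurable c) {p : ℝ} (hp : 0 ≤ p)
    (hcp : μ {ξ | c ξ = true} = ENNReal.ofReal p) :
    μ.real {ξ | c ξ = false} = 1 - p := by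
  have h_true : MeasurableSet {ξ | c ξ = true} := hc (measurableSet_singleton true)
  have h_compl : {ξ | c ξ = false} = {ξ | c ξ = true}ᶜ := by ext; simp
  rw [h_compl, probReal_compl_eq_one_sub h_true, measureReal_def, hcp, ENNReal.toReal_ofReal hp]

theorem integral_norm_ite_add_sub_sq {Ω₁ Ω₂ E : Type*} [MeasurableSpace Ω₁] [MeasurableSpace Ω₂]
    {μ₁ : Measure Ω₁} {μ₂ : Measure Ω₂} [SFinite μ₁] [IsProbabilityMeasure μ₂]
    [NormedAddCommGroup E] [InnerProductSpace ℝ E] [CompleteSpace E]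
    {c : Ω₁ → Bool} (hc : Measurable c) {C : Ω₂ → E} (w x xplus : E) (hC : Integrable C μ₂)
    (hC_sq : Integrable (fun ξ => ‖C ξ - (xplus - x)‖ ^ 2) μ₂)
    (hC_mean : ∫ ξ, C ξ ∂μ₂ = xplus - x) :
    ∫ ξ, ‖(if c ξ.1 then xplus else w + C ξ.2) - xplus‖ ^ 2 ∂(μ₁.prod μ₂) =
      μ₁.real {ξ | c ξ = false} * (‖w - x‖ ^ 2 + ∫ ξ, ‖C ξ - (xplus - x)‖ ^ 2 ∂μ₂) := by
  set v := xplus - x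
  have h_split : ∀ ξ : Ω₁ × Ω₂, ‖(if c ξ.1 then xplus else w + C ξ.2) - xplus‖ ^ 2 =
      if c ξ.1 then 0 else ‖(w - x) + (C ξ.2 - v)‖ ^ 2 := by
    intro ξ
    split_ifs
    · simp
    · congr 2; simp only [v]; abel
  have h_int : Integrable (fun ξ => C ξ - v) μ₂ := hC.sub (integrable_const v)
  have h_mean : ∫ ξ, C ξ - v ∂μ₂ = 0 := by
    simp [integral_sub hC (integrable_const v), hC_mean]
  simp_rw [h_split]
  rw [integral_prod_ite_bool hc (fun ζ => ‖(w - x) + (C ζ - v)‖ ^ 2),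
    integral_norm_add_sq_of_integral_eq_zero _ h_int hC_sq h_mean]

theorem stmt_13_general {d n : ℕ} (hn : 1 ≤ n)
    {Ω₁ Ω₂ : Type*} [MeasurableSpace Ω₁] [MeasurableSpace Ω₂]
    (μ₁ : Measure Ω₁) (μ₂ : Measure Ω₂)
    [IsProbabilityMeasure μ₁] [IsProbabilityMeasure μ₂]
    (p : ℝ) (hp0 : 0 < p)
    (ω : ℝ)
    (Q : Fin n → Ω₂ → EuclideanSpace ℝ (Fin d) → EuclideanSpace ℝ (Fin d))
    (hQint : ∀ i v, Integrable (fun ξ => Q i ξ v) μ₂)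
    (hQsqint : ∀ i v, Integrable (fun ξ => ‖Q i ξ v - v‖^2) μ₂)
    (hQmean : ∀ i v, ∫ ξ, Q i ξ v ∂μ₂ = v)
    (hQvar : ∀ i v, ∫ ξ, ‖Q i ξ v - v‖^2 ∂μ₂ ≤ ω * ‖v‖^2)
    (c : Ω₁ → Bool) (hc : Measurable c)
    (hcp : μ₁ {ξ | c ξ = true} = ENNReal.ofReal p)
    (x xplus : EuclideanSpace ℝ (Fin d))
    (w : Fin n → EuclideanSpace ℝ (Fin d))
    (wplus : Fin n → Ω₁ × Ω₂ → EuclideanSpace ℝ (Fin d))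
    (hwplus : ∀ i ξ, wplus i ξ =
      if c ξ.1 = true then xplus else w i + Q i ξ.2 (xplus - x)) :
    (n : ℝ)⁻¹ * ∑ i, ∫ ξ, ‖wplus i ξ - xplus‖^2 ∂(μ₁.prod μ₂) ≤
      (1 - p) * ((n : ℝ)⁻¹ * ∑ i, ‖w i - x‖^2) + (1 - p) * ω * ‖xplus - x‖^2 := by
  have h_false := probReal_eq_false hc hp0.le hcp
  have h_node : ∀ i, ∫ ξ, ‖wplus i ξ - xplus‖^2 ∂(μ₁.prod μ₂) ≤
      (1 - p) * (‖w i - x‖^2 + ω * ‖xplus - x‖^2) := by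
    intro i
    simp_rw [hwplus i]
    rw [integral_norm_ite_add_sub_sq hc _ _ _ (hQint i _) (hQsqint i _) (hQmean i _), h_false]
    have h_one_sub : 0 ≤ 1 - p := h_false ▸ measureReal_nonneg
    gcongr
    exact hQvar i _
  have hn' : (n : ℝ) ≠ 0 := by positivity
  calc (n : ℝ)⁻¹ * ∑ i, ∫ ξ, ‖wplus i ξ - xplus‖^2 ∂(μ₁.prod μ₂)
      ≤ (n : ℝ)⁻¹ * ∑ i, (1 - p) * (‖w i - x‖^2 + ω * ‖xplus - x‖^2) := by
        gcongr with i
        exact h_node i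
    _ = (1 - p) * ((n : ℝ)⁻¹ * ∑ i, ‖w i - x‖^2) + (1 - p) * ω * ‖xplus - x‖^2 := by
        simp only [← Finset.mul_sum, Finset.sum_add_distrib, Finset.sum_const, Finset.card_univ,
          Fintype.card_fin, nsmul_eq_mul]
        field_simp

theorem stmt_13 {d n : ℕ} (hn : 1 ≤ n)
    {Ω₁ Ω₂ : Type*} [MeasurableSpace Ω₁] [MeasurableSpace Ω₂]
    (μ₁ : Measure Ω₁) (μ₂ : Measure Ω₂)
    [IsProbabilityMeasure μ₁] [IsProbabilityMeasure μ₂]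
    (p : ℝ) (hp0 : 0 < p) (hp1 : p ≤ 1)
    (ω : ℝ) (hω : 0 ≤ ω)
    (Q : Fin n → Ω₂ → EuclideanSpace ℝ (Fin d) → EuclideanSpace ℝ (Fin d))
    (hQint : ∀ i v, Integrable (fun ξ => Q i ξ v) μ₂)
    (hQsqint : ∀ i v, Integrable (fun ξ => ‖Q i ξ v - v‖^2) μ₂)
    (hQmean : ∀ i v, ∫ ξ, Q i ξ v ∂μ₂ = v)
    (hQvar : ∀ i v, ∫ ξ, ‖Q i ξ v - v‖^2 ∂μ₂ ≤ ω * ‖v‖^2)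
    (c : Ω₁ → Bool) (hc : Measurable c)
    (hcp : μ₁ {ξ | c ξ = true} = ENNReal.ofReal p)
    (x xplus : EuclideanSpace ℝ (Fin d))
    (w : Fin n → EuclideanSpace ℝ (Fin d))
    (wplus : Fin n → Ω₁ × Ω₂ → EuclideanSpace ℝ (Fin d))
    (hwplus : ∀ i ξ, wplus i ξ =
      if c ξ.1 = true then xplus else w i + Q i ξ.2 (xplus - x)) :
    (n : ℝ)⁻¹ * ∑ i, ∫ ξ, ‖wplus i ξ - xplus‖^2 ∂(μ₁.prod μ₂) ≤
      (1 - p) * ((n : ℝ)⁻¹ * ∑ i, ‖w i - x‖^2) + (1 - p) * ω * ‖xplus - x‖^2 :=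
  stmt_13_general hn μ₁ μ₂ p hp0 ω Q hQint hQsqint hQmean hQvar c hc hcp x xplus w wplus hwplus
end
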